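/- If every one-dimensional interval contained in [0, 2^w − 1] can be partitioned into at most m dyadic intervals, then every d-dimensional box contained in [0, 2^w − 1]^d can be partitioned into at most m^d dyadic boxes. -/

import Mathlib

/-!
A box is the product of its one-dimensional sides. Partitioning each side `[a j, b j]` into at
most `m` dyadic intervals and taking all products of one piece per coordinate gives at most
`m ^ d` dyadic boxes; two different choices differ in some coordinate, where the chosen
intervals are disjoint, so the boxes are disjoint, and they cover the box because the pieces
of each side cover that side.
-/

/-- Dyadic interval `D y i = {n : 2^i·y ≤ n ≤ 2^i·(y+1)−1}`. -/
def D (y i : ℕ) : Set ℕ := {n | 2 ^ i * y ≤ n ∧ n ≤ 2 ^ i * (y + 1) - 1}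

/-- Dyadic box: the product of dyadic intervals `D (y j) (i j)`. -/
def DB {d : ℕ} (y i : Fin d → ℕ) : Set (Fin d → ℕ) :=
  {p | ∀ j, p j ∈ D (y j) (i j)}

open Set Fintype

theorem Set.PairwiseDisjoint.univ_pi {α : Type*} {κ π : α → Type*} {s : ∀ a, Set (κ a)}
    {t : ∀ a, κ a → Set (π a)} (h : ∀ a, (s a).PairwiseDisjoint (t a)) :
    (univ.pi s).PairwiseDisjoint fun x => univ.pi fun a => t a (x a) := by
  intro x hx y hy hxy
  obtain ⟨a, ha⟩ := Function.ne_iff.mp hxy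
  exact Disjoint.set_pi (mem_univ a) (h a (hx a (mem_univ a)) (hy a (mem_univ a)) ha)

theorem DB_eq_univ_pi {d : ℕ} (y i : Fin d → ℕ) : DB y i = univ.pi fun j => D (y j) (i j) := by
  ext; simp [DB]

theorem stmt_6 {d : ℕ} (w m : ℕ)
    (h1 : ∀ a b : ℕ, a ≤ b → b ≤ 2 ^ w - 1 →
      ∃ S : Finset (ℕ × ℕ), S.card ≤ m ∧
        (S : Set (ℕ × ℕ)).Pairwise (fun p q => Disjoint (D p.1 p.2) (D q.1 q.2)) ∧
        ⋃ p ∈ S, D p.1 p.2 = Set.Icc a b) :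
    ∀ a b : Fin d → ℕ, (∀ j, a j ≤ b j) → (∀ j, b j ≤ 2 ^ w - 1) →
      ∃ S : Finset ((Fin d → ℕ) × (Fin d → ℕ)), S.card ≤ m ^ d ∧
        (S : Set ((Fin d → ℕ) × (Fin d → ℕ))).Pairwise
          (fun p q => Disjoint (DB p.1 p.2) (DB q.1 q.2)) ∧
        ⋃ p ∈ S, DB p.1 p.2 = {q : Fin d → ℕ | ∀ j, a j ≤ q j ∧ q j ≤ b j} := by
  intro a b hab hb
  choose S hcard hdisj hunion using fun j => h1 (a j) (b j) (hab j) (hb j)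
  let e := Equiv.arrowProdEquivProdArrow (Fin d) (fun _ => ℕ) (fun _ => ℕ)
  have hbox (f : Fin d → ℕ × ℕ) : DB (e f).1 (e f).2 = univ.pi fun j => D (f j).1 (f j).2 :=
    DB_eq_univ_pi _ _
  refine ⟨(piFinset S).map e.toEmbedding, ?_, ?_, ?_⟩
  · rw [Finset.card_map, card_piFinset]
    simpa using Finset.prod_le_pow_card Finset.univ (fun j => (S j).card) m fun j _ => hcard j
  · rw [Finset.coe_map, coe_piFinset]
    exact e.injective.injOn.pairwiseDisjoint_image.mpr <| by
      simpa only [PairwiseDisjoint, Function.comp_def, hbox] using PairwiseDisjoint.univ_pi hdisj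
  · rw [← Finset.set_biUnion_coe, Finset.coe_map, coe_piFinset, biUnion_image]
    simp only [Equiv.coe_toEmbedding, hbox]
    rw [biUnion_univ_pi (fun j => (S j : Set (ℕ × ℕ))) fun _ p => D p.1 p.2]
    simp only [Finset.mem_coe, hunion]
    ext q
    simp only [mem_univ_pi, mem_Icc, mem_ofPred_eq]
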